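/- arXiv:0801.2481 — 7 statements merged into one kernel-verified Lean document; each statement's English description precedes it below -/
import Mathlib

section
/- The subalgebra $\mathcal{S} = k[t(1-t), t'(1-t'), t''(1-t'')]$ of $\mathcal{A} = k[t, t^{-1}, (1-t)^{-1}]$ equals $\mathcal{B} \oplus \mathcal{B}(2t-1)(1 - t(1-t))$, where $\mathcal{B} = k[t(1-t), (t(1-t))^{-1}]$. In particular $\mathcal{S}$ has codimension 1 in $\mathcal{A}$ and is thus a maximal subalgebra of $\mathcal{A}$. -/
/-!
Write `u = t(1 - t)`, `v = 2t - 1` and `w = v(1 - u)`. The generators `t'(1 - t')` and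
`t''(1 - t'')` of `𝒮` have product `u⁻¹` and sum and difference `(3u - 1)/u²` and `w/u²`, so
`𝒮 = ℬ[w]`; since `w² = (1 - 4u)(1 - u)² ∈ ℬ`, this is `ℬ + ℬw`. The sum is direct because the
involution `t ↦ 1 - t` fixes `ℬ` and negates `w`. In the same way `v² = 1 - 4u` gives
`𝒜 = ℬ + ℬv`, and `uv ≡ v`, `u⁻¹v ≡ v` modulo `𝒮` show `𝒜 = 𝒮 + k v`: a subalgebra of `𝒜`
strictly containing `𝒮` contains `v`, hence all of `𝒜`.
-/

open Polynomial

namespace Subalgebra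

section CommRing

variable {K A : Type*} [CommRing K] [CommRing A] [Algebra K A]

def adjoinSqrt (R : Subalgebra K A) (w : A) (hw : w * w ∈ R) : Subalgebra K A where
  carrier := {x | ∃ b c, b ∈ R ∧ c ∈ R ∧ x = b + c * w}
  mul_mem' := by
    rintro _ _ ⟨b₁, c₁, hb₁, hc₁, rfl⟩ ⟨b₂, c₂, hb₂, hc₂, rfl⟩
    exact ⟨b₁ * b₂ + c₁ * c₂ * (w * w), b₁ * c₂ + c₁ * b₂, by aesop, by aesop, by ring⟩
  add_mem' := by
    rintro _ _ ⟨b₁, c₁, hb₁, hc₁, rfl⟩ ⟨b₂, c₂, hb₂, hc₂, rfl⟩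
    exact ⟨b₁ + b₂, c₁ + c₂, add_mem hb₁ hb₂, add_mem hc₁ hc₂, by ring⟩
  algebraMap_mem' r := ⟨algebraMap K A r, 0, R.algebraMap_mem r, R.zero_mem, by ring⟩

theorem mem_adjoinSqrt {R : Subalgebra K A} {w : A} {hw : w * w ∈ R} {x : A} :
    x ∈ R.adjoinSqrt w hw ↔ ∃ b c, b ∈ R ∧ c ∈ R ∧ x = b + c * w :=
  Iff.rfl

theorem adjoinSqrt_le {R T : Subalgebra K A} {w : A} {hw : w * w ∈ R} (hR : R ≤ T)
    (hwT : w ∈ T) : R.adjoinSqrt w hw ≤ T := by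
  rintro _ ⟨b, c, hb, hc, rfl⟩
  exact add_mem (hR hb) (mul_mem (hR hc) hwT)

open Submodule in
theorem mul_mem_sup_span_of_mem_adjoin {S : Subalgebra K A} {s : Set A} (hs : s ⊆ S) {v : A}
    (hgen : ∀ g ∈ s, g * v ∈ toSubmodule S ⊔ K ∙ v) {c : A} (hc : c ∈ Algebra.adjoin K s) :
    c * v ∈ toSubmodule S ⊔ K ∙ v := by
  induction hc using Algebra.adjoin_induction with
  | mem g hg => exact hgen g hg
  | algebraMap r => exact mem_sup_right (mem_span_singleton.mpr ⟨r, Algebra.smul_def r v⟩)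
  | add x y _ _ hx hy => rw [add_mul]; exact add_mem hx hy
  | mul x y hx _ hxv hyv =>
    obtain ⟨s', hs', z, hz, hy⟩ := mem_sup.mp hyv
    obtain ⟨l, rfl⟩ := mem_span_singleton.mp hz
    rw [mul_assoc, ← hy, mul_add, mul_smul_comm]
    exact add_mem (mem_sup_left (mul_mem (Algebra.adjoin_le hs hx) hs' : x * s' ∈ S))
      (Submodule.smul_mem _ l hxv)

end CommRing

theorem inv_two_mem {K L : Type*} [Field K] [DivisionRing L] [Algebra K L]
    (R : Subalgebra K L) : (2 : L)⁻¹ ∈ R := by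
  simpa only [map_inv₀, map_ofNat] using R.algebraMap_mem (2⁻¹ : K)

open Submodule in
theorem eq_or_eq_of_le_sup_span {K A : Type*} [Field K] [CommRing A] [Algebra K A]
    {S 𝒜 T : Subalgebra K A} {v : A} (hgen : 𝒜 ≤ Algebra.adjoin K (insert v S))
    (hspan : toSubmodule 𝒜 ≤ toSubmodule S ⊔ K ∙ v) (hST : S ≤ T) (hT : T ≤ 𝒜) :
    T = S ∨ T = 𝒜 := by
  by_cases hTS : T ≤ S
  · exact .inl (le_antisymm hTS hST)
  obtain ⟨x, hxT, hxS⟩ := SetLike.not_le_iff_exists.mp hTS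
  obtain ⟨s, hs, z, hz, rfl⟩ := mem_sup.mp (hspan (hT hxT))
  obtain ⟨l, rfl⟩ := mem_span_singleton.mp hz
  have hl : l ≠ 0 := by rintro rfl; simp_all
  have hvT : v ∈ T := by
    rw [← inv_smul_smul₀ hl v, ← add_sub_cancel_left s (l • v)]
    exact T.smul_mem (sub_mem hxT (hST hs)) _
  exact .inr (le_antisymm hT (hgen.trans (Algebra.adjoin_le (Set.insert_subset hvT hST))))

end Subalgebra

theorem eq_zero_of_add_mul_eq_zero_of_map_eq_neg {L : Type*} [CommRing L] [NoZeroDivisors L]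
    (h2 : (2 : L) ≠ 0) (σ : L →+* L) {b c w : L} (hb : σ b = b) (hc : σ c = c)
    (hσw : σ w = -w) (hw : w ≠ 0) (h : b + c * w = 0) : b = 0 ∧ c = 0 := by
  have hσ := congr(σ $h)
  rw [map_add, map_mul, map_zero, hb, hc, hσw] at hσ
  have hb0 : b = 0 := (mul_eq_zero.mp (by linear_combination h + hσ : 2 * b = 0)).resolve_left h2
  exact ⟨hb0, (mul_eq_zero.mp (by simpa [hb0] using h)).resolve_right hw⟩

section

variable {K L : Type*} [Field K] [Field L] [Algebra K L] {t : L}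

local notation "𝒜" => Algebra.adjoin K {t, t⁻¹, (1 - t)⁻¹}
local notation "𝒮" => Algebra.adjoin K
  {t * (1 - t), (1 - t⁻¹) * (1 - (1 - t⁻¹)), (1 - t)⁻¹ * (1 - (1 - t)⁻¹)}
local notation "ℬ" => Algebra.adjoin K {t * (1 - t), (t * (1 - t))⁻¹}

theorem mul_one_sub_mem_B : t * (1 - t) ∈ ℬ := Algebra.subset_adjoin (by simp)

theorem inv_mul_one_sub_mem_B : (t * (1 - t))⁻¹ ∈ ℬ := Algebra.subset_adjoin (by simp)

theorem inv_mul_one_sub_mem_S (ht : t ≠ 0) (ht1 : 1 - t ≠ 0) : (t * (1 - t))⁻¹ ∈ 𝒮 := by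
  have : (t * (1 - t))⁻¹ = (1 - t⁻¹) * (1 - (1 - t⁻¹)) * ((1 - t)⁻¹ * (1 - (1 - t)⁻¹)) := by
    field_simp; ring
  rw [this]
  exact mul_mem (Algebra.subset_adjoin (by simp)) (Algebra.subset_adjoin (by simp))

theorem B_le_S (ht : t ≠ 0) (ht1 : 1 - t ≠ 0) : ℬ ≤ 𝒮 :=
  Algebra.adjoin_le <| Set.insert_subset (Algebra.subset_adjoin (by simp)) <|
    Set.singleton_subset_iff.mpr (inv_mul_one_sub_mem_S ht ht1)

theorem two_mul_sub_one_mul_mem_S (ht : t ≠ 0) (ht1 : 1 - t ≠ 0) :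
    (2 * t - 1) * (1 - t * (1 - t)) ∈ 𝒮 := by
  have : (2 * t - 1) * (1 - t * (1 - t)) = t * (1 - t) * (t * (1 - t)) *
      ((1 - t⁻¹) * (1 - (1 - t⁻¹)) - (1 - t)⁻¹ * (1 - (1 - t)⁻¹)) := by
    field_simp; ring
  rw [this]
  have : t * (1 - t) ∈ 𝒮 := Algebra.subset_adjoin (by simp)
  have : (1 - t⁻¹) * (1 - (1 - t⁻¹)) ∈ 𝒮 := Algebra.subset_adjoin (by simp)
  have : (1 - t)⁻¹ * (1 - (1 - t)⁻¹) ∈ 𝒮 := Algebra.subset_adjoin (by simp)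
  aesop

theorem mul_self_two_mul_sub_one_mul_mem_B :
    (2 * t - 1) * (1 - t * (1 - t)) * ((2 * t - 1) * (1 - t * (1 - t))) ∈ ℬ := by
  rw [show (2 * t - 1) * (1 - t * (1 - t)) * ((2 * t - 1) * (1 - t * (1 - t))) =
    (1 - 4 * (t * (1 - t))) * (1 - t * (1 - t)) * (1 - t * (1 - t)) by ring]
  have := mul_one_sub_mem_B (K := K) (t := t)
  aesop

theorem mul_self_two_mul_sub_one_mem_B : (2 * t - 1) * (2 * t - 1) ∈ ℬ := by
  rw [show (2 * t - 1) * (2 * t - 1) = 1 - 4 * (t * (1 - t)) by ring]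
  have := mul_one_sub_mem_B (K := K) (t := t)
  aesop

theorem S_eq_adjoinSqrt (ht : t ≠ 0) (ht1 : 1 - t ≠ 0) (h2 : (2 : L) ≠ 0) :
    𝒮 = Subalgebra.adjoinSqrt ℬ ((2 * t - 1) * (1 - t * (1 - t)))
      mul_self_two_mul_sub_one_mul_mem_B := by
  refine le_antisymm (Algebra.adjoin_le ?_)
    (Subalgebra.adjoinSqrt_le (B_le_S ht ht1) (two_mul_sub_one_mul_mem_S ht ht1))
  have hu := mul_one_sub_mem_B (K := K) (t := t)
  have hui := inv_mul_one_sub_mem_B (K := K) (t := t)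
  have h2i := Subalgebra.inv_two_mem ℬ
  rintro _ (rfl | rfl | rfl)
  · exact ⟨t * (1 - t), 0, hu, zero_mem _, by ring⟩
  · refine ⟨2⁻¹ * (3 * (t * (1 - t)) - 1) * (t * (1 - t))⁻¹ * (t * (1 - t))⁻¹,
      2⁻¹ * (t * (1 - t))⁻¹ * (t * (1 - t))⁻¹, by aesop, by aesop, ?_⟩
    field_simp; ring
  · refine ⟨2⁻¹ * (3 * (t * (1 - t)) - 1) * (t * (1 - t))⁻¹ * (t * (1 - t))⁻¹,
      -(2⁻¹ * (t * (1 - t))⁻¹ * (t * (1 - t))⁻¹), by aesop, by aesop, ?_⟩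
    field_simp; ring

theorem mem_S_iff (ht : t ≠ 0) (ht1 : 1 - t ≠ 0) (h2 : (2 : L) ≠ 0) {x : L} :
    x ∈ 𝒮 ↔ ∃ b c, b ∈ ℬ ∧ c ∈ ℬ ∧ x = b + c * (2 * t - 1) * (1 - t * (1 - t)) := by
  rw [S_eq_adjoinSqrt ht ht1 h2]
  simp only [Subalgebra.mem_adjoinSqrt, mul_assoc]

theorem A_le_adjoinSqrt (ht : t ≠ 0) (ht1 : 1 - t ≠ 0) (h2 : (2 : L) ≠ 0) :
    𝒜 ≤ Subalgebra.adjoinSqrt ℬ (2 * t - 1) mul_self_two_mul_sub_one_mem_B := by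
  refine Algebra.adjoin_le ?_
  have hui := inv_mul_one_sub_mem_B (K := K) (t := t)
  have h2i := Subalgebra.inv_two_mem ℬ
  rintro _ (rfl | rfl | rfl)
  · exact ⟨2⁻¹, 2⁻¹, h2i, h2i, by field_simp; ring⟩
  · exact ⟨2⁻¹ * (t * (1 - t))⁻¹, -(2⁻¹ * (t * (1 - t))⁻¹), by aesop, by aesop,
      by field_simp; ring⟩
  · exact ⟨2⁻¹ * (t * (1 - t))⁻¹, 2⁻¹ * (t * (1 - t))⁻¹, by aesop, by aesop,
      by field_simp; ring⟩

open Submodule in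
theorem mul_two_mul_sub_one_mem_S_sup_span (ht : t ≠ 0) (ht1 : 1 - t ≠ 0) {c : L} (hc : c ∈ ℬ) :
    c * (2 * t - 1) ∈ Subalgebra.toSubmodule 𝒮 ⊔ K ∙ (2 * t - 1) := by
  refine Subalgebra.mul_mem_sup_span_of_mem_adjoin
    (fun _ hx ↦ B_le_S ht ht1 (Algebra.subset_adjoin hx)) ?_ hc
  have hw := two_mul_sub_one_mul_mem_S (K := K) ht ht1
  have hv : 2 * t - 1 ∈ K ∙ (2 * t - 1) := mem_span_singleton_self _
  rintro _ (rfl | rfl)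
  · have : t * (1 - t) * (2 * t - 1) = -((2 * t - 1) * (1 - t * (1 - t))) + (2 * t - 1) := by
      ring
    rw [this]
    exact add_mem (mem_sup_left (neg_mem hw)) (mem_sup_right hv)
  · have : (t * (1 - t))⁻¹ * (2 * t - 1) =
        (t * (1 - t))⁻¹ * ((2 * t - 1) * (1 - t * (1 - t))) + (2 * t - 1) := by
      field_simp; ring
    rw [this]
    exact add_mem (mem_sup_left (mul_mem (inv_mul_one_sub_mem_S ht ht1) hw : _ ∈ 𝒮))
      (mem_sup_right hv)

open Submodule in
theorem A_le_S_sup_span (ht : t ≠ 0) (ht1 : 1 - t ≠ 0) (h2 : (2 : L) ≠ 0) :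
    Subalgebra.toSubmodule 𝒜 ≤ Subalgebra.toSubmodule 𝒮 ⊔ K ∙ (2 * t - 1) := by
  intro x hx
  obtain ⟨b, c, hb, hc, rfl⟩ := A_le_adjoinSqrt ht ht1 h2 hx
  exact add_mem (mem_sup_left (B_le_S ht ht1 hb)) (mul_two_mul_sub_one_mem_S_sup_span ht ht1 hc)

theorem A_le_adjoin_insert_S (ht : t ≠ 0) (ht1 : 1 - t ≠ 0) (h2 : (2 : L) ≠ 0) :
    𝒜 ≤ Algebra.adjoin K (insert (2 * t - 1) (𝒮 : Set L)) :=
  (A_le_adjoinSqrt ht ht1 h2).trans <| Subalgebra.adjoinSqrt_le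
    ((B_le_S ht ht1).trans fun _ hx ↦ Algebra.subset_adjoin (Set.mem_insert_of_mem _ hx))
    (Algebra.subset_adjoin (Set.mem_insert _ _))

theorem S_le_A : 𝒮 ≤ 𝒜 := by
  have : t ∈ 𝒜 := Algebra.subset_adjoin (by simp)
  have : t⁻¹ ∈ 𝒜 := Algebra.subset_adjoin (by simp)
  have : (1 - t)⁻¹ ∈ 𝒜 := Algebra.subset_adjoin (by simp)
  refine Algebra.adjoin_le ?_
  rintro _ (rfl | rfl | rfl) <;> aesop

theorem eq_S_or_eq_A (ht : t ≠ 0) (ht1 : 1 - t ≠ 0) (h2 : (2 : L) ≠ 0) (T : Subalgebra K L)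
    (hST : 𝒮 ≤ T) (hTA : T ≤ 𝒜) : T = 𝒮 ∨ T = 𝒜 :=
  Subalgebra.eq_or_eq_of_le_sup_span (A_le_adjoin_insert_S ht ht1 h2) (A_le_S_sup_span ht ht1 h2)
    hST hTA

end

namespace RatFunc

variable {k : Type*} [Field k]

theorem aeval_X_ne_zero {p : k[X]} (hp : p ≠ 0) : aeval (X : RatFunc k) p ≠ 0 := by
  rw [aeval_X_left_eq_algebraMap]
  exact algebraMap_ne_zero hp

theorem one_sub_X_ne_zero : (1 - X : RatFunc k) ≠ 0 := by
  have hp : (1 - Polynomial.X : k[X]) ≠ 0 := fun h ↦ by simpa using congr(Polynomial.eval 0 $h)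
  simpa only [map_sub, map_one, aeval_X] using aeval_X_ne_zero hp

theorem two_mul_X_sub_one_mul_ne_zero : ((2 * X - 1) * (1 - X * (1 - X)) : RatFunc k) ≠ 0 := by
  have hp : ((2 * Polynomial.X - 1) * (1 - Polynomial.X * (1 - Polynomial.X)) : k[X]) ≠ 0 :=
    fun h ↦ by simpa using congr(Polynomial.eval 0 $h)
  simpa only [map_mul, map_sub, map_one, map_ofNat, aeval_X] using aeval_X_ne_zero hp

theorem transcendental_one_sub_X : Transcendental k (1 - X : RatFunc k) := by
  have hdeg : (1 - Polynomial.X : k[X]).natDegree = 1 := by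
    rw [natDegree_sub_eq_right_of_natDegree_lt] <;> simp
  have hne : (1 - Polynomial.X : k[X]) ≠ 0 := fun h ↦ by simpa using congr(Polynomial.eval 0 $h)
  have h := transcendental_X.aeval (1 - Polynomial.X : k[X]) (by simp [hdeg]) (by simpa using hne)
  rwa [map_sub, map_one, aeval_X] at h

noncomputable def reflect : RatFunc k →ₐ[k] RatFunc k :=
  liftAlgHom (aeval (1 - X : RatFunc k)) <|
    nonZeroDivisors_le_comap_nonZeroDivisors_of_injective _ <|
      transcendental_iff_injective.mp transcendental_one_sub_X

theorem reflect_X : reflect (X : RatFunc k) = 1 - X := by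
  conv_lhs =>
    rw [← algebraMap_X, ← div_one (algebraMap _ _ _), ← map_one (algebraMap k[X] (RatFunc k))]
  rw [reflect, liftAlgHom_apply_div]
  simp

theorem reflect_eq_self_of_mem {b : RatFunc k}
    (hb : b ∈ Algebra.adjoin k {X * (1 - X), (X * (1 - X))⁻¹}) : reflect b = b := by
  have hu : reflect (X * (1 - X) : RatFunc k) = X * (1 - X) := by
    rw [map_mul, map_sub, map_one, reflect_X]; ring
  refine (AlgHom.eqOn_adjoin_iff (φ := reflect) (ψ := AlgHom.id k _)).mpr ?_ hb
  rintro _ (rfl | rfl)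
  · exact hu
  · rw [map_inv₀, hu]
    rfl

theorem reflect_two_mul_X_sub_one_mul :
    reflect ((2 * X - 1) * (1 - X * (1 - X)) : RatFunc k) = -((2 * X - 1) * (1 - X * (1 - X))) := by
  simp only [map_mul, map_sub, map_one, map_ofNat, reflect_X]
  ring

end RatFunc

theorem stmt2_general (k : Type*) [Field k] (h2 : (2:k) ≠ 0) :
    let t : RatFunc k := RatFunc.X
    let t' : RatFunc k := 1 - t⁻¹
    let t'' : RatFunc k := (1 - t)⁻¹
    let 𝒜 : Subalgebra k (RatFunc k) := Algebra.adjoin k {t, t⁻¹, (1-t)⁻¹}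
    let S : Subalgebra k (RatFunc k) :=
      Algebra.adjoin k {t*(1-t), t'*(1-t'), t''*(1-t'')}
    let B : Subalgebra k (RatFunc k) := Algebra.adjoin k {t*(1-t), (t*(1-t))⁻¹}
    (∀ x : RatFunc k,
      x ∈ S ↔ ∃ b c, b ∈ B ∧ c ∈ B ∧ x = b + c * (2*t-1) * (1 - t*(1-t))) ∧
    (∀ b c, b ∈ B → c ∈ B → b + c * (2*t-1) * (1 - t*(1-t)) = 0 → b = 0 ∧ c = 0) ∧
    S ≤ 𝒜 ∧
    (∀ T : Subalgebra k (RatFunc k), S ≤ T → T ≤ 𝒜 → T = S ∨ T = 𝒜) := by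
  intro t t' t'' 𝒜 S B
  have ht : t ≠ 0 := RatFunc.X_ne_zero
  have ht1 : 1 - t ≠ 0 := RatFunc.one_sub_X_ne_zero
  have h2' : (2 : RatFunc k) ≠ 0 := by
    simpa only [map_ofNat] using (map_ne_zero (algebraMap k (RatFunc k))).mpr h2
  refine ⟨fun x ↦ mem_S_iff ht ht1 h2', fun b c hb hc h ↦ ?_, S_le_A, eq_S_or_eq_A ht ht1 h2'⟩
  rw [mul_assoc] at h
  exact eq_zero_of_add_mul_eq_zero_of_map_eq_neg h2' RatFunc.reflect.toRingHom
    (RatFunc.reflect_eq_self_of_mem hb) (RatFunc.reflect_eq_self_of_mem hc)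
    RatFunc.reflect_two_mul_X_sub_one_mul RatFunc.two_mul_X_sub_one_mul_ne_zero h

/-- 𝒮 = k[t(1-t), t'(1-t'), t''(1-t'')] equals ℬ ⊕ ℬ(2t-1)(1-t(1-t)) with
ℬ = k[t(1-t), (t(1-t))⁻¹]; in particular 𝒮 is a maximal subalgebra of
𝒜 = k[t, t⁻¹, (1-t)⁻¹]. -/
theorem stmt2 (k : Type*) [Field k] (h2 : (2:k) ≠ 0) (h3 : (3:k) ≠ 0) :
    let t : RatFunc k := RatFunc.X
    let t' : RatFunc k := 1 - t⁻¹
    let t'' : RatFunc k := (1 - t)⁻¹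
    let 𝒜 : Subalgebra k (RatFunc k) := Algebra.adjoin k {t, t⁻¹, (1-t)⁻¹}
    let S : Subalgebra k (RatFunc k) :=
      Algebra.adjoin k {t*(1-t), t'*(1-t'), t''*(1-t'')}
    let B : Subalgebra k (RatFunc k) := Algebra.adjoin k {t*(1-t), (t*(1-t))⁻¹}
    (∀ x : RatFunc k,
      x ∈ S ↔ ∃ b c, b ∈ B ∧ c ∈ B ∧ x = b + c * (2*t-1) * (1 - t*(1-t))) ∧
    (∀ b c, b ∈ B → c ∈ B → b + c * (2*t-1) * (1 - t*(1-t)) = 0 → b = 0 ∧ c = 0) ∧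
    S ≤ 𝒜 ∧
    (∀ T : Subalgebra k (RatFunc k), S ≤ T → T ≤ 𝒜 → T = S ∨ T = 𝒜) :=
  stmt2_general k h2
end

section
/- Let $M$ be a $k$-vector space with an anticommutative bilinear product $(x,y) \mapsto xy$ and a trilinear product $\{x,y,z\}$ satisfying: (a) $(xy)z = \{x,z,y\} - \{y,z,x\}$; (b) $\{a,b,xy\} = -\{b,a,x\}y - x\{b,a,y\}$; (c) $\{a,b,\{x,y,z\}\} - \{x,y,\{a,b,z\}\} = \{\{a,b,x\},y,z\} - \{x,\{b,a,y\},z\}$, for all elements. Then for all $x,y,z,t \in M$: $\{xy,z,t\} + \{yz,x,t\} + \{zx,y,t\} = 0$. -/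
/-! Applying (a) to `((xy)t)z` and then (b) to `{t,z,xy}` expresses `{xy,z,t}` through products
of triple products in which `t` always sits in the middle slot. In the cyclic sum over `x, y, z`
these twelve terms cancel in pairs, up to anticommutativity. -/

section

variable {R M : Type*} [CommRing R] [AddCommGroup M] [Module R M]
  (mul : M →ₗ[R] M →ₗ[R] M) (trip : M →ₗ[R] M →ₗ[R] M →ₗ[R] M)

theorem trip_mul_left_eq
    (ha : ∀ x y z, mul (mul x y) z = trip x z y - trip y z x)
    (hb : ∀ a b x y, trip a b (mul x y) = - mul (trip b a x) y - mul x (trip b a y))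
    (a b c t : M) :
    trip (mul a b) c t
      = mul (trip a t b - trip b t a) c - mul (trip c t a) b - mul a (trip c t b) := by
  have h := ha (mul a b) t c
  rw [ha a b t, hb t c a b] at h
  rw [h]
  abel

theorem trip_mul_left_cyclic_sum
    (hanti : ∀ x y, mul x y = - mul y x)
    (ha : ∀ x y z, mul (mul x y) z = trip x z y - trip y z x)
    (hb : ∀ a b x y, trip a b (mul x y) = - mul (trip b a x) y - mul x (trip b a y))
    (x y z t : M) :
    trip (mul x y) z t + trip (mul y z) x t + trip (mul z x) y t = 0 := by
  simp only [trip_mul_left_eq mul trip ha hb, map_sub, LinearMap.sub_apply]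
  rw [hanti x (trip z t y), hanti y (trip x t z), hanti z (trip y t x)]
  abel

end

theorem stmt7_general (k : Type*) [Field k]
    (M : Type*) [AddCommGroup M] [Module k M]
    (mul : M →ₗ[k] M →ₗ[k] M) (trip : M →ₗ[k] M →ₗ[k] M →ₗ[k] M)
    (hanti : ∀ x y, mul x y = - mul y x)
    (ha : ∀ x y z, mul (mul x y) z = trip x z y - trip y z x)
    (hb : ∀ a b x y,
      trip a b (mul x y) = - mul (trip b a x) y - mul x (trip b a y)) :
    ∀ x y z t : M,
      trip (mul x y) z t + trip (mul y z) x t + trip (mul z x) y t = 0 :=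
  trip_mul_left_cyclic_sum mul trip hanti ha hb

/-- If an anticommutative bilinear product and a trilinear product satisfy
identities (a), (b), (c), then {xy,z,t} + {yz,x,t} + {zx,y,t} = 0. -/
theorem stmt7 (k : Type*) [Field k] (h2 : (2:k) ≠ 0) (h3 : (3:k) ≠ 0)
    (M : Type*) [AddCommGroup M] [Module k M]
    (mul : M →ₗ[k] M →ₗ[k] M) (trip : M →ₗ[k] M →ₗ[k] M →ₗ[k] M)
    (hanti : ∀ x y, mul x y = - mul y x)
    (ha : ∀ x y z, mul (mul x y) z = trip x z y - trip y z x)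
    (hb : ∀ a b x y,
      trip a b (mul x y) = - mul (trip b a x) y - mul x (trip b a y))
    (hc : ∀ a b x y z,
      trip a b (trip x y z) - trip x y (trip a b z)
        = trip (trip a b x) y z - trip x (trip b a y) z) :
    ∀ x y z t : M,
      trip (mul x y) z t + trip (mul y z) x t + trip (mul z x) y t = 0 :=
  stmt7_general k M mul trip hanti ha hb
end

section
/- Let $M$ be a $k$-vector space with an anticommutative bilinear product $xy$ and trilinear product $\{x,y,z\}$ satisfying identities (a) $(xy)z = \{x,z,y\} - \{y,z,x\}$, (b) $\{a,b,xy\} = -\{b,a,x\}y - x\{b,a,y\}$, (c) $\{a,b,\{x,y,z\}\} - \{x,y,\{a,b,z\}\} = \{\{a,b,x\},y,z\} - \{x,\{b,a,y\},z\}$. If moreover $M = M^2$ (i.e., $M$ is spanned by products $xy$), then $\{x,yz,t\} + \{y,zx,t\} + \{z,xy,t\} = 0$ for all $x,y,z,t \in M$. -/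
/-!
Expanding `{yz, x, u}` with (a) and then the resulting `{u, x, yz}` with (b), the cyclic sum
`{yz, x, u} + {zx, y, u} + {xy, z, u}` cancels by anticommutativity. Feeding this into (b) kills
`{x, yz, t} + {y, zx, t} + {z, xy, t}` whenever `t` is a product; as this expression is linear
in `t` and the products span `M`, it vanishes identically.
-/

section TripleSystem

variable {R M : Type*} [CommRing R] [AddCommGroup M] [Module R M]
  (mul : M →ₗ[R] M →ₗ[R] M) (trip : M →ₗ[R] M →ₗ[R] M →ₗ[R] M)

theorem trip_mul_cyclic_left_eq_zero (hanti : ∀ x y, mul x y = - mul y x)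
    (ha : ∀ x y z, mul (mul x y) z = trip x z y - trip y z x)
    (hb : ∀ a b x y, trip a b (mul x y) = - mul (trip b a x) y - mul x (trip b a y))
    (x y z u : M) :
    trip (mul y z) x u + trip (mul z x) y u + trip (mul x y) z u = 0 := by
  have ha' : ∀ a b c, trip a b c = mul (mul a c) b + trip c b a := fun a b c => by
    rw [ha a c b]; abel
  rw [ha' (mul y z), ha' (mul z x), ha' (mul x y), ha y z u, ha z x u, ha x y u,
    hb u x y z, hb u y z x, hb u z x y]
  simp only [map_sub, LinearMap.sub_apply]
  rw [hanti y (trip x u z), hanti z (trip y u x), hanti x (trip z u y)]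
  abel

theorem trip_mul_cyclic_mid_mul_eq_zero (hanti : ∀ x y, mul x y = - mul y x)
    (ha : ∀ x y z, mul (mul x y) z = trip x z y - trip y z x)
    (hb : ∀ a b x y, trip a b (mul x y) = - mul (trip b a x) y - mul x (trip b a y))
    (x y z u v : M) :
    trip x (mul y z) (mul u v) + trip y (mul z x) (mul u v) + trip z (mul x y) (mul u v) = 0 := by
  calc _ = - mul (trip (mul y z) x u + trip (mul z x) y u + trip (mul x y) z u) v
        - mul u (trip (mul y z) x v + trip (mul z x) y v + trip (mul x y) z v) := by
          simp only [hb, map_add, LinearMap.add_apply]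
          abel
    _ = 0 := by
      simp only [trip_mul_cyclic_left_eq_zero mul trip hanti ha hb, map_zero,
        LinearMap.zero_apply, neg_zero, sub_zero]

end TripleSystem

theorem stmt8_general (k : Type*) [Field k]
    (M : Type*) [AddCommGroup M] [Module k M]
    (mul : M →ₗ[k] M →ₗ[k] M) (trip : M →ₗ[k] M →ₗ[k] M →ₗ[k] M)
    (hanti : ∀ x y, mul x y = - mul y x)
    (ha : ∀ x y z, mul (mul x y) z = trip x z y - trip y z x)
    (hb : ∀ a b x y,
      trip a b (mul x y) = - mul (trip b a x) y - mul x (trip b a y))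
    (hM2 : (⊤ : Submodule k M) = Submodule.span k {m | ∃ x y, m = mul x y}) :
    ∀ x y z t : M,
      trip x (mul y z) t + trip y (mul z x) t + trip z (mul x y) t = 0 := by
  intro x y z t
  have hsum : trip x (mul y z) + trip y (mul z x) + trip z (mul x y) = 0 := by
    refine LinearMap.ext_on hM2.symm ?_
    rintro _ ⟨u, v, rfl⟩
    exact trip_mul_cyclic_mid_mul_eq_zero mul trip hanti ha hb x y z u v
  simpa using LinearMap.congr_fun hsum t

/-- Under identities (a), (b), (c), if M = M², then
{x,yz,t} + {y,zx,t} + {z,xy,t} = 0. -/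
theorem stmt8 (k : Type*) [Field k] (h2 : (2:k) ≠ 0) (h3 : (3:k) ≠ 0)
    (M : Type*) [AddCommGroup M] [Module k M]
    (mul : M →ₗ[k] M →ₗ[k] M) (trip : M →ₗ[k] M →ₗ[k] M →ₗ[k] M)
    (hanti : ∀ x y, mul x y = - mul y x)
    (ha : ∀ x y z, mul (mul x y) z = trip x z y - trip y z x)
    (hb : ∀ a b x y,
      trip a b (mul x y) = - mul (trip b a x) y - mul x (trip b a y))
    (hc : ∀ a b x y z,
      trip a b (trip x y z) - trip x y (trip a b z)
        = trip (trip a b x) y z - trip x (trip b a y) z)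
    (hM2 : (⊤ : Submodule k M) = Submodule.span k {m | ∃ x y, m = mul x y}) :
    ∀ x y z t : M,
      trip x (mul y z) t + trip y (mul z x) t + trip z (mul x y) t = 0 :=
  stmt8_general k M mul trip hanti ha hb hM2
end

section
/- Let $(M, xy, \{x,y,z\})$ be a generalized Malcev algebra such that the triple product $\{x,y,z\}$ is skew-symmetric in $x$ and $y$. Then $(M, xy)$ is a Malcev algebra, and $2\{x,y,z\} = (xy)z + x(yz) - y(xz)$ for all $x,y,z \in M$. -/
/-!
Skew-symmetry of `{x, y, z}` in `x, y` lets `(xy)z = {x, z, y} - {y, z, x}` be solved for the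
triple product, `2 {x, y, z} = (xy)z + x(yz) - y(xz)`, and turns
`{a, b, xy} = -{b, a, x}y - x{b, a, y}` into the statement that the operators
`D(x, y) = L_{xy} + [L_x, L_y]` are derivations. In an anticommutative algebra, applying `D(x, y)`
to `xz` and `D(x, z)` to `xy` gives two linear relations between `J(x, y, xz)`, `J(xy, x, z)` and
`J(x, y, z) x`; eliminating `J(xy, x, z)` leaves `3 J(x, y, xz) = 3 J(x, y, z) x`.
-/

lemma LinearMap.isAlt_of_apply_eq_neg {K M : Type*} [Field K] [AddCommGroup M] [Module K M]
    {mul : M →ₗ[K] M →ₗ[K] M} (h2 : (2 : K) ≠ 0) (hanti : ∀ x y, mul x y = -mul y x) :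
    mul.IsAlt := by
  intro x
  have h : (2 : K) • mul x x = 0 := by
    rw [two_smul]
    nth_rewrite 1 [hanti]
    exact neg_add_cancel _
  exact (smul_eq_zero.1 h).resolve_left h2

section Malcev

variable {k M : Type*} [CommRing k] [AddCommGroup M] [Module k M] (mul : M →ₗ[k] M →ₗ[k] M)

def jacobian (x y z : M) : M :=
  mul (mul x y) z + mul (mul y z) x + mul (mul z x) y

def IsMalcev : Prop :=
  ∀ x y z : M, jacobian mul x y (mul x z) = mul (jacobian mul x y z) x

-- `L_{xy} + [L_x, L_y]` applied to `z`, with `L` the left multiplication; for Malcev algebras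
-- these are Sagle's standard derivations.
def standardDerivation (x y z : M) : M :=
  mul (mul x y) z + mul x (mul y z) - mul y (mul x z)

variable {mul}

lemma jacobian_rotate (x y z : M) : jacobian mul x y z = jacobian mul y z x := by
  unfold jacobian
  abel

namespace LinearMap.IsAlt

variable (hmul : mul.IsAlt)
include hmul

lemma apply_swap (x y : M) : mul y x = -mul x y := (hmul.neg x y).symm

lemma jacobian_swap_right (x y z : M) : jacobian mul x z y = -jacobian mul x y z := by
  rw [jacobian, jacobian, hmul.apply_swap x z, hmul.apply_swap z y, hmul.apply_swap y x]
  simp only [map_neg, neg_apply]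
  abel

lemma jacobian_self_right (x y : M) : jacobian mul x y x = 0 := by
  rw [jacobian, hmul.apply_swap x y, hmul.self_eq_zero, map_neg, neg_apply, map_zero, zero_apply]
  abel

lemma standardDerivation_eq (x y z : M) :
    standardDerivation mul x y z = (2 : k) • mul (mul x y) z - jacobian mul x y z := by
  rw [standardDerivation, jacobian, hmul.apply_swap (mul y z) x, hmul.apply_swap (mul x z) y,
    hmul.apply_swap x z, map_neg, neg_apply]
  module

lemma jacobian_mul_left_eq {x y z : M}
    (hD : standardDerivation mul x y (mul x z)
      = mul (standardDerivation mul x y x) z + mul x (standardDerivation mul x y z)) :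
    jacobian mul x y (mul x z)
      = -(2 : k) • jacobian mul (mul x y) x z - mul (jacobian mul x y z) x := by
  have hJ : jacobian mul (mul x y) x z
      = mul (mul (mul x y) x) z - mul (mul x y) (mul x z) + mul x (mul (mul x y) z) := by
    rw [jacobian, hmul.apply_swap (mul x y) (mul x z), hmul.apply_swap x (mul z (mul x y)),
      hmul.apply_swap (mul x y) z, map_neg, neg_neg]
    abel
  simp only [hmul.standardDerivation_eq, hmul.jacobian_self_right, map_sub, map_smul, sub_zero,
    smul_apply] at hD
  linear_combination (norm := module) -hD + (2 : k) • hJ + hmul.apply_swap (jacobian mul x y z) x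

end LinearMap.IsAlt

end Malcev

theorem LinearMap.IsAlt.isMalcev_of_standardDerivation_apply_mul {K M : Type*} [Field K]
    [AddCommGroup M] [Module K M] {mul : M →ₗ[K] M →ₗ[K] M}
    (hmul : mul.IsAlt) (h3 : (3 : K) ≠ 0)
    (hD : ∀ a b c d, standardDerivation mul a b (mul c d)
      = mul (standardDerivation mul a b c) d + mul c (standardDerivation mul a b d)) :
    IsMalcev mul := by
  intro x y z
  have hxy := hmul.jacobian_mul_left_eq (hD x y x z)
  have hxz := hmul.jacobian_mul_left_eq (hD x z x y)
  rw [← jacobian_rotate, jacobian_rotate (mul x z), hmul.jacobian_swap_right x y z, map_neg,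
    neg_apply] at hxz
  have h : (3 : K) • (jacobian mul x y (mul x z) - mul (jacobian mul x y z) x) = 0 := by
    linear_combination (norm := module) -hxy + (2 : K) • hxz
  exact sub_eq_zero.1 ((smul_eq_zero.1 h).resolve_left h3)

section TripleProduct

variable {k M : Type*} [CommRing k] [AddCommGroup M] [Module k M]
  {mul : M →ₗ[k] M →ₗ[k] M} {trip : M →ₗ[k] M →ₗ[k] M →ₗ[k] M}

lemma two_smul_trip_eq_standardDerivation (hanti : ∀ x y, mul x y = -mul y x)
    (h1 : ∀ x y z, mul (mul x y) z = trip x z y - trip y z x)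
    (hskew : ∀ x y z, trip x y z = -trip y x z) (x y z : M) :
    (2 : k) • trip x y z = standardDerivation mul x y z := by
  rw [standardDerivation, h1 x y z, hanti x (mul y z), h1 y z x, hanti y (mul x z), h1 x z y,
    hskew z x y, hskew z y x, hskew y x z]
  module

lemma trip_apply_mul
    (h2 : ∀ a b x y, trip a b (mul x y) = -mul (trip b a x) y - mul x (trip b a y))
    (hskew : ∀ x y z, trip x y z = -trip y x z) (a b x y : M) :
    trip a b (mul x y) = mul (trip a b x) y + mul x (trip a b y) := by
  rw [h2, hskew b a, hskew b a, map_neg, LinearMap.neg_apply, map_neg, neg_neg, sub_neg_eq_add]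

lemma standardDerivation_apply_mul (hanti : ∀ x y, mul x y = -mul y x)
    (h1 : ∀ x y z, mul (mul x y) z = trip x z y - trip y z x)
    (h2 : ∀ a b x y, trip a b (mul x y) = -mul (trip b a x) y - mul x (trip b a y))
    (hskew : ∀ x y z, trip x y z = -trip y x z) (a b c d : M) :
    standardDerivation mul a b (mul c d)
      = mul (standardDerivation mul a b c) d + mul c (standardDerivation mul a b d) := by
  simp only [← two_smul_trip_eq_standardDerivation hanti h1 hskew, trip_apply_mul h2 hskew,
    map_smul, LinearMap.smul_apply, smul_add]

end TripleProduct

theorem stmt9_general (k : Type*) [Field k] (hk2 : (2:k) ≠ 0) (hk3 : (3:k) ≠ 0)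
    (M : Type*) [AddCommGroup M] [Module k M]
    (mul : M →ₗ[k] M →ₗ[k] M) (trip : M →ₗ[k] M →ₗ[k] M →ₗ[k] M)
    (hanti : ∀ x y, mul x y = - mul y x)
    (h1 : ∀ x y z, mul (mul x y) z = trip x z y - trip y z x)
    (h2 : ∀ a b x y,
      trip a b (mul x y) = - mul (trip b a x) y - mul x (trip b a y))
    (hskew : ∀ x y z, trip x y z = - trip y x z) :
    let J : M → M → M → M := fun x y z =>
      mul (mul x y) z + mul (mul y z) x + mul (mul z x) y
    (∀ x y z : M, J x y (mul x z) = mul (J x y z) x) ∧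
    (∀ x y z : M,
      (2 : k) • trip x y z
        = mul (mul x y) z + mul x (mul y z) - mul y (mul x z)) := by
  intro J
  have hmul : mul.IsAlt := LinearMap.isAlt_of_apply_eq_neg hk2 hanti
  exact ⟨hmul.isMalcev_of_standardDerivation_apply_mul hk3
    (standardDerivation_apply_mul hanti h1 h2 hskew),
    two_smul_trip_eq_standardDerivation hanti h1 hskew⟩

/-- If (M, xy, {x,y,z}) is a generalized Malcev algebra with {x,y,z}
skew-symmetric in x, y, then (M, xy) is a Malcev algebra and
2{x,y,z} = (xy)z + x(yz) - y(xz). -/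
theorem stmt9 (k : Type*) [Field k] (hk2 : (2:k) ≠ 0) (hk3 : (3:k) ≠ 0)
    (M : Type*) [AddCommGroup M] [Module k M]
    (mul : M →ₗ[k] M →ₗ[k] M) (trip : M →ₗ[k] M →ₗ[k] M →ₗ[k] M)
    (hanti : ∀ x y, mul x y = - mul y x)
    (h1 : ∀ x y z, mul (mul x y) z = trip x z y - trip y z x)
    (h2 : ∀ a b x y,
      trip a b (mul x y) = - mul (trip b a x) y - mul x (trip b a y))
    (h3 : ∀ a b x y z,
      trip a b (trip x y z) - trip x y (trip a b z)
        = trip (trip a b x) y z - trip x (trip b a y) z)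
    (h4a : ∀ x y z t,
      trip (mul x y) z t + trip (mul y z) x t + trip (mul z x) y t = 0)
    (h4b : ∀ x y z t,
      trip x (mul y z) t + trip y (mul z x) t + trip z (mul x y) t = 0)
    (hskew : ∀ x y z, trip x y z = - trip y x z) :
    let J : M → M → M → M := fun x y z =>
      mul (mul x y) z + mul (mul y z) x + mul (mul z x) y
    (∀ x y z : M, J x y (mul x z) = mul (J x y z) x) ∧
    (∀ x y z : M,
      (2 : k) • trip x y z
        = mul (mul x y) z + mul x (mul y z) - mul y (mul x z)) :=
  stmt9_general k hk2 hk3 M mul trip hanti h1 h2 hskew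
end

section
/- Let $E$ be a three-dimensional vector space over a field $k$ of characteristic not 2 or 3, with a nondegenerate symmetric bilinear form $b$ and a cross product $\times$ satisfying $(u \times v) \times w = b(u,w)v - b(v,w)u$ for all $u,v,w$. Define $xy = 2\, x \times y$ and $\{x,y,z\} = b(x,y)z - 3b(y,z)x$. Then $(E, xy, \{x,y,z\})$ satisfies the generalized Malcev algebra identities: (1) $(xy)z = \{x,z,y\} - \{y,z,x\}$; (2) $\{a,b,xy\} = -\{b,a,x\}y - x\{b,a,y\}$; (3) $\{a,b,\{x,y,z\}\} - \{x,y,\{a,b,z\}\} = \{\{a,b,x\},y,z\} - \{x,\{b,a,y\},z\}$; (4) $\{xy,z,t\} + \{yz,x,t\} + \{zx,y,t\} = 0$ and $\{x,yz,t\} + \{y,zx,t\} + \{z,xy,t\} = 0$. -/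
/-!
Everything follows from the rule `(u × v) × w = b(u,w) v - b(v,w) u` and antisymmetry.
Expanding `((x × y) × a) × c` by the rule in two ways gives
`b(x × y, c) a = b(a,c) x × y + b(a,x) y × c - b(a,y) x × c`. Comparing two instances of it
shows that the triple product `b(x × y, z)` is cyclic (the difference multiplies every vector
to zero), and expanding `(x × y) × (z × t) = -(z × t) × (x × y)` then writes `b(x × y, z) t`
in terms of `x, y, z`. Each Malcev identity is a linear combination of these.
-/

section CrossProduct

variable {k E : Type*} [CommRing k] [AddCommGroup E] [Module k E]
  {b : E →ₗ[k] E →ₗ[k] k} {cross : E →ₗ[k] E →ₗ[k] E}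

def crossMul (cross : E →ₗ[k] E →ₗ[k] E) (x y : E) : E := (2 : k) • cross x y

def crossTrip (b : E →ₗ[k] E →ₗ[k] k) (x y z : E) : E := b x y • z - (3 * b y z) • x

theorem cross_swap (halt : ∀ x, cross x x = 0) (x y : E) : cross x y = -cross y x := by
  have h := halt (x + y)
  simp only [map_add, LinearMap.add_apply, halt, zero_add, add_zero] at h
  exact eq_neg_of_add_eq_zero_right h

variable (hsymm : ∀ x y, b x y = b y x)
include hsymm

theorem crossTrip_crossTrip (a c x y z : E) :
    crossTrip b a c (crossTrip b x y z) - crossTrip b x y (crossTrip b a c z)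
      = crossTrip b (crossTrip b a c x) y z - crossTrip b x (crossTrip b c a y) z := by
  simp only [crossTrip, map_sub, map_smul, LinearMap.sub_apply, LinearMap.smul_apply,
    smul_eq_mul]
  rw [hsymm c a, hsymm y a, hsymm x c]
  module

variable (hcross : ∀ u v w, cross (cross u v) w = b u w • v - b v w • u)
include hcross

theorem crossMul_crossMul (x y z : E) :
    crossMul cross (crossMul cross x y) z = crossTrip b x z y - crossTrip b y z x := by
  simp only [crossMul, crossTrip, map_smul, LinearMap.smul_apply]
  rw [hcross x y z, hsymm z y, hsymm z x]
  module

theorem triple_smul_eq_cross (a c x y : E) :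
    b (cross x y) c • a = b a c • cross x y + b a x • cross y c - b a y • cross x c := by
  have h := hcross (cross x y) a c
  rw [hcross x y a] at h
  simp only [map_sub, map_smul, LinearMap.sub_apply, LinearMap.smul_apply] at h
  rw [hsymm x a, hsymm y a] at h
  linear_combination (norm := module) -h

variable (halt : ∀ x, cross x x = 0)
include halt

theorem crossTrip_crossMul (a c x y : E) :
    crossTrip b a c (crossMul cross x y)
      = -crossMul cross (crossTrip b c a x) y - crossMul cross x (crossTrip b c a y) := by
  simp only [crossMul, crossTrip, map_sub, map_smul, LinearMap.sub_apply,
    LinearMap.smul_apply, smul_eq_mul]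
  rw [cross_swap halt c y, hsymm c a, hsymm c (cross x y)]
  linear_combination (norm := module) (-6 : k) • triple_smul_eq_cross hsymm hcross a c x y

variable [NoZeroSMulDivisors k E]

theorem triple_cyclic (x y z : E) : b (cross x y) z = b (cross y z) x := by
  by_contra hne
  have hzero : ∀ a : E, a = 0 := fun a => by
    have key : (b (cross x y) z - b (cross y z) x) • a = 0 := by
      have h₁ := triple_smul_eq_cross hsymm hcross a z x y
      have h₂ := triple_smul_eq_cross hsymm hcross a x y z
      rw [cross_swap halt z x, cross_swap halt y x] at h₂
      linear_combination (norm := module) h₁ - h₂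
    exact (eq_zero_or_eq_zero_of_smul_eq_zero key).resolve_left (sub_ne_zero.mpr hne)
  exact hne (by rw [hzero z, hzero x, map_zero, map_zero])

theorem triple_smul_eq_sum (x y z t : E) :
    b (cross x y) z • t
      = b (cross y z) t • x + b (cross z x) t • y + b (cross x y) t • z := by
  have h := cross_swap halt (cross x y) (cross z t)
  rw [hcross x y (cross z t), hcross z t (cross x y), hsymm x (cross z t),
    hsymm y (cross z t), hsymm z (cross x y), hsymm t (cross x y),
    ← triple_cyclic hsymm hcross halt x z t, ← triple_cyclic hsymm hcross halt y z t,
    cross_swap halt x z] at h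
  simp only [map_neg, LinearMap.neg_apply] at h
  linear_combination (norm := module) h

theorem crossTrip_crossMul_cyclic_left (x y z t : E) :
    crossTrip b (crossMul cross x y) z t + crossTrip b (crossMul cross y z) x t
      + crossTrip b (crossMul cross z x) y t = 0 := by
  simp only [crossMul, crossTrip, map_smul, LinearMap.smul_apply, smul_eq_mul]
  rw [← triple_cyclic hsymm hcross halt x y z, triple_cyclic hsymm hcross halt z x y,
    hsymm z t, hsymm x t, hsymm y t, cross_swap halt z x]
  linear_combination (norm := module) (6 : k) • triple_smul_eq_cross hsymm hcross t z x y

theorem crossTrip_crossMul_cyclic_middle (x y z t : E) :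
    crossTrip b x (crossMul cross y z) t + crossTrip b y (crossMul cross z x) t
      + crossTrip b z (crossMul cross x y) t = 0 := by
  simp only [crossMul, crossTrip, map_smul, LinearMap.smul_apply, smul_eq_mul]
  rw [hsymm x (cross y z), hsymm y (cross z x), hsymm z (cross x y),
    ← triple_cyclic hsymm hcross halt x y z, triple_cyclic hsymm hcross halt z x y]
  linear_combination (norm := module) (6 : k) • triple_smul_eq_sum hsymm hcross halt x y z t

end CrossProduct

theorem stmt13_general (k : Type*) [Field k]
    (E : Type*) [AddCommGroup E] [Module k E]
    (b : E →ₗ[k] E →ₗ[k] k)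
    (hsymm : ∀ x y, b x y = b y x)
    (cross : E →ₗ[k] E →ₗ[k] E)
    (halt : ∀ x, cross x x = 0)
    (hcross : ∀ u v w, cross (cross u v) w = b u w • v - b v w • u) :
    let mul : E → E → E := fun x y => (2 : k) • cross x y
    let trip : E → E → E → E := fun x y z => b x y • z - (3 * b y z) • x
    (∀ x y z, mul (mul x y) z = trip x z y - trip y z x) ∧
    (∀ a' b' x y,
      trip a' b' (mul x y) = - mul (trip b' a' x) y - mul x (trip b' a' y)) ∧
    (∀ a' b' x y z,
      trip a' b' (trip x y z) - trip x y (trip a' b' z)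
        = trip (trip a' b' x) y z - trip x (trip b' a' y) z) ∧
    (∀ x y z t,
      trip (mul x y) z t + trip (mul y z) x t + trip (mul z x) y t = 0) ∧
    (∀ x y z t,
      trip x (mul y z) t + trip y (mul z x) t + trip z (mul x y) t = 0) :=
  ⟨crossMul_crossMul hsymm hcross, crossTrip_crossMul hsymm hcross halt,
    crossTrip_crossTrip hsymm, crossTrip_crossMul_cyclic_left hsymm hcross halt,
    crossTrip_crossMul_cyclic_middle hsymm hcross halt⟩

/-- On a 3-dimensional space E with nondegenerate symmetric bilinear form b
and cross product satisfying (u×v)×w = b(u,w)v - b(v,w)u, the products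
xy = 2 x×y and {x,y,z} = b(x,y)z - 3b(y,z)x satisfy the generalized Malcev
algebra identities (1)-(4). -/
theorem stmt13 (k : Type*) [Field k] (hk2 : (2:k) ≠ 0) (hk3 : (3:k) ≠ 0)
    (E : Type*) [AddCommGroup E] [Module k E]
    (hdim : Module.finrank k E = 3)
    (b : E →ₗ[k] E →ₗ[k] k)
    (hsymm : ∀ x y, b x y = b y x)
    (hnondeg : ∀ x, (∀ y, b x y = 0) → x = 0)
    (cross : E →ₗ[k] E →ₗ[k] E)
    (halt : ∀ x, cross x x = 0)
    (hcross : ∀ u v w, cross (cross u v) w = b u w • v - b v w • u)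
    (hcross2 : ∀ x y z t,
      b (cross x y) (cross z t) = b x z * b y t - b x t * b y z) :
    let mul : E → E → E := fun x y => (2 : k) • cross x y
    let trip : E → E → E → E := fun x y z => b x y • z - (3 * b y z) • x
    (∀ x y z, mul (mul x y) z = trip x z y - trip y z x) ∧
    (∀ a' b' x y,
      trip a' b' (mul x y) = - mul (trip b' a' x) y - mul x (trip b' a' y)) ∧
    (∀ a' b' x y z,
      trip a' b' (trip x y z) - trip x y (trip a' b' z)
        = trip (trip a' b' x) y z - trip x (trip b' a' y) z) ∧
    (∀ x y z t,
      trip (mul x y) z t + trip (mul y z) x t + trip (mul z x) y t = 0) ∧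
    (∀ x y z t,
      trip x (mul y z) t + trip y (mul z x) t + trip z (mul x y) t = 0) :=
  stmt13_general k E b hsymm cross halt hcross
end

section
/- Let $M$ be a vector space over a field $k$ of characteristic not 2 or 3, with basis vector $a$, a subspace $E$, and its dual subspace $E^*$, so $M = ka \oplus E \oplus E^*$. Define the anticommutative product by $ae = -e$, $af = f$, $fe = f(e)a$ (extended anticommutatively, with $E E = 0 = E^* E^*$), and the triple product by: $\{a,a,a\} = 2a$, $\{a,a,e\} = -e$, $\{a,a,f\} = -f$, $\{e,f,a\} = \{f,e,a\} = -f(e)a$, $\{e,f,e'\} = f(e')e + f(e)e'$, $\{f,e,e'\} = -f(e')e$, $\{e,f,f'\} = -f'(e)f$, $\{f,e,f'\} = f'(e)f + f(e)f'$, all other products involving $a$ in the first two slots with mixed arguments being zero. Then $(M, xy, \{x,y,z\})$ satisfies the generalized Malcev algebra identities (1)-(4). Moreover, if $\dim E \geq 2$, then $(M, xy)$ is not a Malcev algebra. -/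
/-!
Each of the identities (1)–(4) is, componentwise on `k × E × E*`, a polynomial identity in the
scalars `x.1` and the pairings `f(e)` of the arguments, so it is checked by normalisation.
For the second claim, take `x = (0, e₁, f₁)`, `y = (0, e₂, f₂)`, `z = (0, 0, f₂)`: the
`a`-component of `J(x, y, xz) - J(x, y, z)x` is twice the determinant of `(fᵢ eⱼ)`, and a
pair of vectors with a nonsingular pairing matrix exists as soon as `dim E ≥ 2`.
-/

namespace GeneralizedMalcevExample

variable {k : Type*} [Field k] {E : Type*} [AddCommGroup E] [Module k E]

abbrev Space (k E : Type*) [Field k] [AddCommGroup E] [Module k E] : Type _ :=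
  k × E × Module.Dual k E

def mul (x y : Space k E) : Space k E :=
  (x.2.2 y.2.1 - y.2.2 x.2.1,
   y.1 • x.2.1 - x.1 • y.2.1,
   x.1 • y.2.2 - y.1 • x.2.2)

def trip (x y z : Space k E) : Space k E :=
  (2 * x.1 * y.1 * z.1 - z.1 * (y.2.2 x.2.1 + x.2.2 y.2.1),
   y.2.2 z.2.1 • x.2.1 - x.2.2 z.2.1 • y.2.1
     + (y.2.2 x.2.1 - x.1 * y.1) • z.2.1,
   z.2.2 y.2.1 • x.2.2 - z.2.2 x.2.1 • y.2.2
     + (x.2.2 y.2.1 - x.1 * y.1) • z.2.2)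

def jacobian (x y z : Space k E) : Space k E :=
  mul (mul x y) z + mul (mul y z) x + mul (mul z x) y

theorem mul_mul_eq_trip_sub_trip (x y z : Space k E) :
    mul (mul x y) z = trip x z y - trip y z x := by
  ext
  · simp [mul, trip]; ring
  · simp [mul, trip]; module
  · simp [mul, trip]; ring

theorem trip_mul (a b x y : Space k E) :
    trip a b (mul x y) = - mul (trip b a x) y - mul x (trip b a y) := by
  ext
  · simp [mul, trip]; ring
  · simp [mul, trip]; module
  · simp [mul, trip]; ring

theorem trip_trip (a b x y z : Space k E) :
    trip a b (trip x y z) - trip x y (trip a b z)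
      = trip (trip a b x) y z - trip x (trip b a y) z := by
  ext
  · simp [trip]; ring
  · simp [trip]; module
  · simp [trip]; ring

theorem trip_mul_left_cyclic (x y z t : Space k E) :
    trip (mul x y) z t + trip (mul y z) x t + trip (mul z x) y t = 0 := by
  ext
  · simp [mul, trip]; ring
  · simp [mul, trip]; module
  · simp [mul, trip]; ring

theorem trip_mul_middle_cyclic (x y z t : Space k E) :
    trip x (mul y z) t + trip y (mul z x) t + trip z (mul x y) t = 0 := by
  ext
  · simp [mul, trip]; ring
  · simp [mul, trip]; module
  · simp [mul, trip]; ring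

theorem fst_jacobian_mul_sub_mul_jacobian (e₁ e₂ : E) (f₁ f₂ : Module.Dual k E) :
    (jacobian (0, e₁, f₁) (0, e₂, f₂) (mul (0, e₁, f₁) (0, 0, f₂))).1
      - (mul (jacobian (0, e₁, f₁) (0, e₂, f₂) (0, 0, f₂)) (0, e₁, f₁)).1
      = 2 * (f₁ e₁ * f₂ e₂ - f₁ e₂ * f₂ e₁) := by
  simp [jacobian, mul]
  ring

theorem exists_dual_pair (h : 2 ≤ Module.rank k E) :
    ∃ (e₁ e₂ : E) (f₁ f₂ : Module.Dual k E), f₁ e₁ ≠ 0 ∧ f₁ e₂ = 0 ∧ f₂ e₂ ≠ 0 := by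
  have h₁ : 1 < Module.rank k E := lt_of_lt_of_le (by norm_num) h
  have : Nontrivial E := rank_pos_iff_nontrivial.mp (zero_lt_one.trans h₁)
  obtain ⟨e₂, he₂⟩ := exists_ne (0 : E)
  obtain ⟨e₁, hv⟩ := exists_linearIndependent_pair_of_one_lt_rank h₁ he₂
  have he₁ : e₁ ∉ k ∙ e₂ := by
    rw [Submodule.mem_span_singleton]
    rintro ⟨c, rfl⟩
    simpa using LinearIndependent.pair_iff.mp hv c (-1) (by simp)
  obtain ⟨f₁, hf₁, hf₁₂⟩ := Submodule.exists_dual_map_eq_bot_of_notMem he₁ inferInstance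
  obtain ⟨f₂, hf₂⟩ := Module.Projective.exists_dual_ne_zero k he₂
  exact ⟨e₁, e₂, f₁, f₂, hf₁, by simpa [Submodule.map_span] using hf₁₂, hf₂⟩

theorem not_malcev (hk2 : (2 : k) ≠ 0) (h : 2 ≤ Module.rank k E) :
    ¬ ∀ x y z : Space k E, jacobian x y (mul x z) = mul (jacobian x y z) x := by
  intro hMalcev
  obtain ⟨e₁, e₂, f₁, f₂, h₁₁, h₁₂, h₂₂⟩ := exists_dual_pair h
  have hfst := fst_jacobian_mul_sub_mul_jacobian e₁ e₂ f₁ f₂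
  rw [hMalcev, sub_self, h₁₂, zero_mul, sub_zero] at hfst
  exact mul_ne_zero hk2 (mul_ne_zero h₁₁ h₂₂) hfst.symm

end GeneralizedMalcevExample

open GeneralizedMalcevExample in
theorem stmt14_general (k : Type*) [Field k] (hk2 : (2:k) ≠ 0)
    (E : Type*) [AddCommGroup E] [Module k E] :
    let M := k × E × Module.Dual k E
    let mul : M → M → M := fun x y =>
      (x.2.2 y.2.1 - y.2.2 x.2.1,
       y.1 • x.2.1 - x.1 • y.2.1,
       x.1 • y.2.2 - y.1 • x.2.2)
    let trip : M → M → M → M := fun x y z =>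
      (2 * x.1 * y.1 * z.1 - z.1 * (y.2.2 x.2.1 + x.2.2 y.2.1),
       y.2.2 z.2.1 • x.2.1 - x.2.2 z.2.1 • y.2.1
         + (y.2.2 x.2.1 - x.1 * y.1) • z.2.1,
       z.2.2 y.2.1 • x.2.2 - z.2.2 x.2.1 • y.2.2
         + (x.2.2 y.2.1 - x.1 * y.1) • z.2.2)
    let J : M → M → M → M := fun x y z =>
      mul (mul x y) z + mul (mul y z) x + mul (mul z x) y
    ((∀ x y z, mul (mul x y) z = trip x z y - trip y z x) ∧
     (∀ a b x y,
       trip a b (mul x y) = - mul (trip b a x) y - mul x (trip b a y)) ∧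
     (∀ a b x y z,
       trip a b (trip x y z) - trip x y (trip a b z)
         = trip (trip a b x) y z - trip x (trip b a y) z) ∧
     (∀ x y z t,
       trip (mul x y) z t + trip (mul y z) x t + trip (mul z x) y t = 0) ∧
     (∀ x y z t,
       trip x (mul y z) t + trip y (mul z x) t + trip z (mul x y) t = 0)) ∧
    (2 ≤ Module.rank k E →
      ¬ (∀ x y z : M, J x y (mul x z) = mul (J x y z) x)) :=
  ⟨⟨mul_mul_eq_trip_sub_trip, trip_mul, trip_trip, trip_mul_left_cyclic,
    trip_mul_middle_cyclic⟩, not_malcev hk2⟩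

/-- On M = ka ⊕ E ⊕ E*, the products from Example 5.2 (special Lie algebras)
satisfy the generalized Malcev algebra identities (1)-(4); moreover, if
dim E ≥ 2, the binary product is not a Malcev product. -/
theorem stmt14 (k : Type*) [Field k] (hk2 : (2:k) ≠ 0) (hk3 : (3:k) ≠ 0)
    (E : Type*) [AddCommGroup E] [Module k E] :
    let M := k × E × Module.Dual k E
    let mul : M → M → M := fun x y =>
      (x.2.2 y.2.1 - y.2.2 x.2.1,
       y.1 • x.2.1 - x.1 • y.2.1,
       x.1 • y.2.2 - y.1 • x.2.2)
    let trip : M → M → M → M := fun x y z =>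
      (2 * x.1 * y.1 * z.1 - z.1 * (y.2.2 x.2.1 + x.2.2 y.2.1),
       y.2.2 z.2.1 • x.2.1 - x.2.2 z.2.1 • y.2.1
         + (y.2.2 x.2.1 - x.1 * y.1) • z.2.1,
       z.2.2 y.2.1 • x.2.2 - z.2.2 x.2.1 • y.2.2
         + (x.2.2 y.2.1 - x.1 * y.1) • z.2.2)
    let J : M → M → M → M := fun x y z =>
      mul (mul x y) z + mul (mul y z) x + mul (mul z x) y
    ((∀ x y z, mul (mul x y) z = trip x z y - trip y z x) ∧
     (∀ a b x y,
       trip a b (mul x y) = - mul (trip b a x) y - mul x (trip b a y)) ∧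
     (∀ a b x y z,
       trip a b (trip x y z) - trip x y (trip a b z)
         = trip (trip a b x) y z - trip x (trip b a y) z) ∧
     (∀ x y z t,
       trip (mul x y) z t + trip (mul y z) x t + trip (mul z x) y t = 0) ∧
     (∀ x y z t,
       trip x (mul y z) t + trip y (mul z x) t + trip z (mul x y) t = 0)) ∧
    (2 ≤ Module.rank k E →
      ¬ (∀ x y z : M, J x y (mul x z) = mul (J x y z) x)) :=
  stmt14_general k hk2 E
end

section
/- Let $(A, \cdot, -)$ be an algebra with involution and $\mathfrak{lrt}(A)$ its Lie algebra of Lie related triples. Then the maps $\varphi(d_0,d_1,d_2) = (d_2,d_0,d_1)$ and $\tau(d_0,d_1,d_2) = (\bar d_0, \bar d_2, \bar d_1)$, where $\bar d(x) = \overline{d(\bar x)}$, are Lie algebra automorphisms of $\mathfrak{lrt}(A)$ satisfying $\varphi^3 = \mathrm{id}$, $\tau^2 = \mathrm{id}$, and $\tau \varphi \tau = \varphi^2$ (thus generating an action of $S_3$). -/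
/-!
Shifting the index of a Lie related triple by any `j : Fin 3` preserves the defining identity,
since it is stated uniformly in `i`. For `τ`, apply the identity at index `-i` to `(x̄, ȳ)`
and then the involution: the anti-multiplicativity of `x ↦ x̄` swaps the two summands, which
matches `-(i + 1) = -i + 2` and `-(i + 2) = -i + 1` in `Fin 3`. Conjugation by an involutive
linear map is an algebra automorphism of `Module.End`, so it preserves commutators.
-/

section LieRelatedTriple

variable {R A : Type*} [CommSemiring R] [AddCommGroup A] [Module R A]

/-- The defining identity of `𝔩𝔯𝔱(A)`, with `d̄ᵢ(x y)` written as `inv (dᵢ (inv (x y)))`. -/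
def IsLieRelatedTriple (mul : A →ₗ[R] A →ₗ[R] A) (inv : A →ₗ[R] A)
    (d : Fin 3 → Module.End R A) : Prop :=
  ∀ i x y, inv (d i (inv (mul x y))) = mul (d (i + 1) x) y + mul x (d (i + 2) y)

variable {mul : A →ₗ[R] A →ₗ[R] A} {inv : A →ₗ[R] A} {d : Fin 3 → Module.End R A}

theorem involutive_conj_conj (hinv : Function.Involutive inv) (f : Module.End R A) :
    inv ∘ₗ (inv ∘ₗ f ∘ₗ inv) ∘ₗ inv = f := by
  ext x
  simp only [LinearMap.comp_apply, hinv x, hinv (f x)]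

theorem involutive_conj_mul (hinv : Function.Involutive inv) (f g : Module.End R A) :
    inv ∘ₗ (f * g) ∘ₗ inv = (inv ∘ₗ f ∘ₗ inv) * (inv ∘ₗ g ∘ₗ inv) := by
  ext x
  simp only [LinearMap.comp_apply, Module.End.mul_apply, hinv (g (inv x))]

theorem involutive_conj_commutator (hinv : Function.Involutive inv) (f g : Module.End R A) :
    inv ∘ₗ (f * g - g * f) ∘ₗ inv
      = (inv ∘ₗ f ∘ₗ inv) * (inv ∘ₗ g ∘ₗ inv) - (inv ∘ₗ g ∘ₗ inv) * (inv ∘ₗ f ∘ₗ inv) := by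
  rw [LinearMap.sub_comp, LinearMap.comp_sub, involutive_conj_mul hinv, involutive_conj_mul hinv]

theorem IsLieRelatedTriple.shift (hd : IsLieRelatedTriple mul inv d) (j : Fin 3) :
    IsLieRelatedTriple mul inv (fun i => d (i + j)) := by
  intro i x y
  beta_reduce
  rw [add_right_comm i 1 j, add_right_comm i 2 j]
  exact hd (i + j) x y

theorem IsLieRelatedTriple.conj_neg (hinv : Function.Involutive inv)
    (hinv_mul : ∀ x y, inv (mul x y) = mul (inv y) (inv x)) (hd : IsLieRelatedTriple mul inv d) :
    IsLieRelatedTriple mul inv (fun i => inv ∘ₗ d (-i) ∘ₗ inv) := by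
  intro i x y
  have h := hd (-i) (inv y) (inv x)
  rw [hinv_mul, hinv, hinv] at h
  have h1 : -(i + 1) = -i + 2 := by fin_cases i <;> rfl
  have h2 : -(i + 2) = -i + 1 := by fin_cases i <;> rfl
  simp only [LinearMap.comp_apply, hinv _, h1, h2]
  rw [← hinv (d (-i) (mul x y)), h, map_add, hinv_mul, hinv_mul, hinv, hinv, add_comm]

end LieRelatedTriple

theorem stmt16_general (k : Type*) [Field k]
    (A : Type*) [AddCommGroup A] [Module k A]
    (mul : A →ₗ[k] A →ₗ[k] A)
    (inv : A →ₗ[k] A)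
    (hinv_inv : ∀ x, inv (inv x) = x)
    (hinv_mul : ∀ x y, inv (mul x y) = mul (inv y) (inv x)) :
    let barD : Module.End k A → Module.End k A := fun f => inv ∘ₗ f ∘ₗ inv
    let lrt : Set (Fin 3 → Module.End k A) :=
      {d | ∀ i x y, inv (d i (inv (mul x y)))
        = mul (d (i+1) x) y + mul x (d (i+2) y)}
    let φ : (Fin 3 → Module.End k A) → (Fin 3 → Module.End k A) :=
      fun d i => d (i + 2)
    let τ : (Fin 3 → Module.End k A) → (Fin 3 → Module.End k A) :=
      fun d i => barD (d (-i))
    (∀ d ∈ lrt, φ d ∈ lrt) ∧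
    (∀ d ∈ lrt, τ d ∈ lrt) ∧
    (∀ d e : Fin 3 → Module.End k A,
      φ (fun i => d i * e i - e i * d i)
        = fun i => (φ d) i * (φ e) i - (φ e) i * (φ d) i) ∧
    (∀ d e : Fin 3 → Module.End k A,
      τ (fun i => d i * e i - e i * d i)
        = fun i => (τ d) i * (τ e) i - (τ e) i * (τ d) i) ∧
    (∀ d, φ (φ (φ d)) = d) ∧
    (∀ d, τ (τ d) = d) ∧
    (∀ d, τ (φ (τ d)) = φ (φ d)) := by
  intro barD lrt φ τ
  refine ⟨fun d hd => IsLieRelatedTriple.shift hd 2,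
    fun d hd => IsLieRelatedTriple.conj_neg hinv_inv hinv_mul hd,
    fun d e => rfl,
    fun d e => funext fun i => involutive_conj_commutator hinv_inv _ _, ?_, ?_, ?_⟩
  · intro d
    funext i
    have hi : i + 2 + 2 + 2 = i := by fin_cases i <;> rfl
    simp only [φ, hi]
  · intro d
    funext i
    simp only [τ, barD, neg_neg]
    exact involutive_conj_conj hinv_inv _
  · intro d
    funext i
    have hi : -(-i + 2) = i + 2 + 2 := by fin_cases i <;> rfl
    simp only [τ, φ, barD, hi]
    exact involutive_conj_conj hinv_inv _

/-- The maps φ(d₀,d₁,d₂) = (d₂,d₀,d₁) and τ(d₀,d₁,d₂) = (d̄₀,d̄₂,d̄₁) are Lie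
algebra automorphisms of the Lie algebra of Lie related triples, with
φ³ = id, τ² = id and τφτ = φ². -/
theorem stmt16 (k : Type*) [Field k] (hk2 : (2:k) ≠ 0) (hk3 : (3:k) ≠ 0)
    (A : Type*) [AddCommGroup A] [Module k A]
    (mul : A →ₗ[k] A →ₗ[k] A)
    (inv : A →ₗ[k] A)
    (hinv_inv : ∀ x, inv (inv x) = x)
    (hinv_mul : ∀ x y, inv (mul x y) = mul (inv y) (inv x)) :
    let barD : Module.End k A → Module.End k A := fun f => inv ∘ₗ f ∘ₗ inv
    let lrt : Set (Fin 3 → Module.End k A) :=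
      {d | ∀ i x y, inv (d i (inv (mul x y)))
        = mul (d (i+1) x) y + mul x (d (i+2) y)}
    let φ : (Fin 3 → Module.End k A) → (Fin 3 → Module.End k A) :=
      fun d i => d (i + 2)
    let τ : (Fin 3 → Module.End k A) → (Fin 3 → Module.End k A) :=
      fun d i => barD (d (-i))
    (∀ d ∈ lrt, φ d ∈ lrt) ∧
    (∀ d ∈ lrt, τ d ∈ lrt) ∧
    (∀ d e : Fin 3 → Module.End k A,
      φ (fun i => d i * e i - e i * d i)
        = fun i => (φ d) i * (φ e) i - (φ e) i * (φ d) i) ∧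
    (∀ d e : Fin 3 → Module.End k A,
      τ (fun i => d i * e i - e i * d i)
        = fun i => (τ d) i * (τ e) i - (τ e) i * (τ d) i) ∧
    (∀ d, φ (φ (φ d)) = d) ∧
    (∀ d, τ (τ d) = d) ∧
    (∀ d, τ (φ (τ d)) = φ (φ d)) :=
  stmt16_general k A mul inv hinv_inv hinv_mul
end
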